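/- arXiv:1711.01492 — 2 statements merged into one kernel-verified Lean document; each statement's English description precedes it below -/
import Mathlib

section
/- (Ghost Lemma) Let T be a triangulated category, F_0 → F_1 → ... → F_{n+1} a sequence of morphisms g_1,...,g_{n+1} with composite g, and P ∈ T an object such that each induced map Hom(P[i], F_{k-1}) → Hom(P[i], F_k) is zero for all i ∈ ℤ and all k = 1,...,n+1. Then for every object Q in ⟨P⟩_n (the thick n-step generation closure of P), the induced map Hom(Q[i], F_0) → Hom(Q[i], F_{n+1}) is zero for all i. -/
open CategoryTheory CategoryTheory.Limits CategoryTheory.Pretriangulated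

universe v u

variable {C : Type u} [Category.{v} C] [Preadditive C] [HasZeroObject C]
  [HasShift C ℤ] [∀ n : ℤ, (shiftFunctor C n).Additive] [Pretriangulated C]

/-- The objects of `[G]₀`: finite direct sums of shifts of `G` (up to isomorphism). -/
inductive GenZero (G : C) : C → Prop
  | shift (n : ℤ) (X : C) : Nonempty (X ≅ (shiftFunctor C n).obj G) → GenZero G X
  | zero (X : C) : IsZero X → GenZero G X
  | sum {X Y : C} (Z : C) (b : BinaryBicone X Y) :
      Nonempty b.IsBilimit → Nonempty (Z ≅ b.pt) →
      GenZero G X → GenZero G Y → GenZero G Z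

/-- The objects of `[G]ₙ`: objects obtained from `G` in `n` cone-steps, i.e. `F ∈ [G]ₖ`
iff there is a distinguished triangle `F_{k-1} → F → F₀ → F_{k-1}[1]` with
`F₀ ∈ [G]₀` and `F_{k-1} ∈ [G]_{k-1}`. -/
def Gen (G : C) : ℕ → C → Prop
  | 0 => GenZero G
  | (k+1) => fun X => ∃ (Y Z : C) (f : Y ⟶ X) (g : X ⟶ Z)
      (h : Z ⟶ (shiftFunctor C (1 : ℤ)).obj Y),
      Gen G k Y ∧ GenZero G Z ∧ Triangle.mk f g h ∈ distTriang C

/-- The objects of `⟨G⟩ₙ`, the idempotent closure of `[G]ₙ`: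
direct summands of objects of `[G]ₙ`. -/
def ThickGen (G : C) (n : ℕ) (X : C) : Prop :=
  ∃ (X' : C) (b : BinaryBicone X X'), Nonempty b.IsBilimit ∧ Gen G n b.pt

/-- The composite `F 0 ⟶ F m` of a chain of morphisms `g k : F k ⟶ F (k+1)`. -/
def chainComp (F : ℕ → C) (g : ∀ k, F k ⟶ F (k + 1)) : ∀ m, F 0 ⟶ F m
  | 0 => 𝟙 _
  | (m + 1) => chainComp F g m ≫ g m

/-!
A map `u` is a ghost for `X` when it kills every map from a shift of `X`. For fixed `u`, the
objects `X` for which `u` is a ghost are closed under shifts, retracts, zero objects and binary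
biproducts, so a `P`-ghost is a ghost for every object of `[P]₀`. If `Y → X → Z → Y⟦1⟧` is
distinguished, `u` is a ghost for `Y` and `v` a ghost for `Z`, then `u ≫ v` is a ghost for `X`:
for `φ : X⟦i⟧ ⟶ _` the map `φ ≫ u` vanishes on `Y⟦i⟧`, hence factors through `X⟦i⟧ ⟶ Z⟦i⟧`,
where `v` kills it. Induction along the triangles defining `[P]ₙ` shows that a composite of
`n + 1` `P`-ghosts is a ghost for every object of `[P]ₙ`, and retracts pass this to `⟨P⟩ₙ`.
-/

section

variable {D : Type*} [Category D] [HasZeroMorphisms D] [HasShift D ℤ]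

def IsGhostFor (P : D) {A B : D} (u : A ⟶ B) : Prop :=
  ∀ (i : ℤ) (φ : (shiftFunctor D i).obj P ⟶ A), φ ≫ u = 0

namespace IsGhostFor

variable {P X Y A B : D} {u : A ⟶ B}

lemma of_retract (h : Retract X Y) (hY : IsGhostFor Y u) : IsGhostFor X u := fun i φ => by
  rw [← (h.map (shiftFunctor D i)).retract_assoc φ, Category.assoc, hY, comp_zero]

lemma shift (hP : IsGhostFor P u) (n : ℤ) : IsGhostFor ((shiftFunctor D n).obj P) u :=
  fun i φ => by
    rw [← ((shiftFunctorAdd D n i).app P).inv_hom_id_assoc φ, Category.assoc, hP, comp_zero]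

end IsGhostFor

end

namespace IsGhostFor

variable {D : Type*} [Category D] [Preadditive D] [HasShift D ℤ]
  [∀ n : ℤ, (shiftFunctor D n).Additive] {P X Y A B : D} {u : A ⟶ B}

lemma of_isZero (hX : IsZero X) : IsGhostFor X u := fun i φ => by
  rw [((shiftFunctor D i).map_isZero hX).eq_of_src φ 0, zero_comp]

lemma of_isBilimit {b : BinaryBicone X Y} (hb : b.IsBilimit) (hX : IsGhostFor X u)
    (hY : IsGhostFor Y u) : IsGhostFor b.pt u := fun i φ => by
  let S := shiftFunctor D i
  calc φ ≫ u = S.map b.fst ≫ (S.map b.inl ≫ φ) ≫ u + S.map b.snd ≫ (S.map b.inr ≫ φ) ≫ u := by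
        simp only [← Category.assoc, ← Preadditive.add_comp, ← S.map_comp, ← S.map_add,
          IsBilimit.binary_total hb, S.map_id, Category.id_comp]
    _ = 0 := by rw [hX, hY, comp_zero, comp_zero, add_zero]

lemma of_genZero (hP : IsGhostFor P u) (hX : GenZero P X) : IsGhostFor X u := by
  induction hX with
  | shift n _ e => exact (hP.shift n).of_retract (.ofIso e.some)
  | zero _ hX => exact of_isZero hX
  | sum _ _ hb e _ _ hX hY => exact (of_isBilimit hb.some hX hY).of_retract (.ofIso e.some)

end IsGhostFor

namespace IsGhostFor

variable {A B : C} {u : A ⟶ B}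

lemma comp_of_distinguished {B' : C} {v : B ⟶ B'} {T : Triangle C} (hT : T ∈ distTriang C)
    (hu : IsGhostFor T.obj₁ u) (hv : IsGhostFor T.obj₃ v) : IsGhostFor T.obj₂ (u ≫ v) :=
  fun i φ => by
    obtain ⟨ψ, hψ⟩ : ∃ ψ : (shiftFunctor C i).obj T.obj₃ ⟶ B,
        φ ≫ u = (i.negOnePow • (shiftFunctor C i).map T.mor₂) ≫ ψ :=
      Triangle.yoneda_exact₂ _ (T.shift_distinguished hT i) (φ ≫ u) (by
        change (i.negOnePow • (shiftFunctor C i).map T.mor₁) ≫ φ ≫ u = 0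
        rw [Linear.units_smul_comp, ← Category.assoc, hu, smul_zero])
    rw [← Category.assoc, hψ, Category.assoc, hv, comp_zero]

end IsGhostFor

lemma isGhostFor_chainComp_of_gen {P : C} (F : ℕ → C) (g : ∀ k, F k ⟶ F (k + 1)) {n : ℕ}
    (hg : ∀ k, k < n + 1 → IsGhostFor P (g k)) {X : C} (hX : Gen P n X) :
    IsGhostFor X (chainComp F g (n + 1)) := by
  induction n generalizing X with
  | zero =>
    rw [show chainComp F g 1 = g 0 from Category.id_comp _]
    exact (hg 0 (by omega)).of_genZero hX
  | succ n ih =>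
    obtain ⟨_, _, _, _, _, hY, hZ, hT⟩ := hX
    exact IsGhostFor.comp_of_distinguished hT (ih (fun k hk => hg k (by omega)) hY)
      ((hg (n + 1) (by omega)).of_genZero hZ)

/-- Ghost Lemma: if each `g k : F k ⟶ F (k+1)` (`k = 0, …, n`) kills all maps from
shifts of `P`, then the composite `F 0 ⟶ F (n+1)` kills all maps from shifts of any
object `Q` of `⟨P⟩ₙ`. -/
theorem ghost_lemma {P : C} {n : ℕ} (F : ℕ → C) (g : ∀ k, F k ⟶ F (k + 1))
    (hghost : ∀ k, k < n + 1 → ∀ (i : ℤ) (φ : (shiftFunctor C i).obj P ⟶ F k),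
      φ ≫ g k = 0)
    (Q : C) (hQ : ThickGen P n Q) (i : ℤ) (ψ : (shiftFunctor C i).obj Q ⟶ F 0) :
    ψ ≫ chainComp F g (n + 1) = 0 := by
  obtain ⟨Q', b, -, hgen⟩ := hQ
  exact (isGhostFor_chainComp_of_gen F g hghost hgen).of_retract b.retract_left i ψ
end

section
/- Let R be a commutative Noetherian ring, f ∈ R, and M an object of D(R-Mod) such that M ∈_f ⟨R⟩_n, meaning: there exists M' and a distinguished triangle P → M ⊕ M' → C → P[1] with P ∈ [R]_n and f·C = 0 (f annihilates C as an object of the derived category). Then for any R-modules S_0,...,S_{n+1} and morphisms θ_k : S_{k-1} → S_k[1] in D(R-Mod) (k=1,...,n+1), the image of the composite map Hom(M,S_0) → Hom(M, S_{n+1}[n+1]) induced by θ_{n+1}∘...∘θ_1 is annihilated by f. -/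
open CategoryTheory CategoryTheory.Limits CategoryTheory.Pretriangulated

universe v u

variable {C : Type u} [Category.{v} C] [Preadditive C] [HasZeroObject C]
  [HasShift C ℤ] [∀ n : ℤ, (shiftFunctor C n).Additive] [Pretriangulated C]

section

variable (R : Type u) [CommRing R] [IsNoetherianRing R]
  [HasDerivedCategory (ModuleCat.{u} R)]

open DerivedCategory

/-- The `R`-module `N` viewed as an object of the derived category `D(R-Mod)`. -/
noncomputable abbrev sObj (N : ModuleCat.{u} R) : DerivedCategory (ModuleCat.{u} R) :=
  (DerivedCategory.singleFunctor (ModuleCat.{u} R) 0).obj N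

/-- `M ∈_f ⟨R⟩ₙ` : there are `M'` and a distinguished triangle
`P → M ⊕ M' → C → P[1]` with `P ∈ [R]ₙ` and `f · C = 0`. -/
def FApprox (f : R) (n : ℕ) (X : DerivedCategory (ModuleCat.{u} R)) : Prop :=
  ∃ (X' : DerivedCategory (ModuleCat.{u} R)) (b : BinaryBicone X X')
    (_ : Nonempty b.IsBilimit)
    (P : DerivedCategory (ModuleCat.{u} R)) (_ : Gen (sObj R (ModuleCat.of R R)) n P)
    (KC : CochainComplex (ModuleCat.{u} R) ℤ)
    (u : P ⟶ b.pt) (v : b.pt ⟶ DerivedCategory.Q.obj KC)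
    (w : DerivedCategory.Q.obj KC ⟶ (shiftFunctor _ (1 : ℤ)).obj P),
    (Triangle.mk u v w ∈ distTriang (DerivedCategory (ModuleCat.{u} R))) ∧
      DerivedCategory.Q.map (f • 𝟙 KC) = 0

/-- The composite `S 0 ⟶ (S m)[m]` of a chain of degree-one morphisms
`θ k : S k ⟶ (S (k+1))[1]` between modules in the derived category. -/
noncomputable def thetaChain (S : ℕ → ModuleCat.{u} R)
    (θ : ∀ k, sObj R (S k) ⟶
      (shiftFunctor (DerivedCategory (ModuleCat.{u} R)) (1 : ℤ)).obj (sObj R (S (k + 1)))) :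
    ∀ m : ℕ, sObj R (S 0) ⟶
      (shiftFunctor (DerivedCategory (ModuleCat.{u} R)) ((m : ℕ) : ℤ)).obj (sObj R (S m))
  | 0 => (shiftFunctorZero' (DerivedCategory (ModuleCat.{u} R)) (((0 : ℕ) : ℤ))
      (by simp)).inv.app _
  | (m + 1) => thetaChain S θ m ≫
      (shiftFunctor (DerivedCategory (ModuleCat.{u} R)) ((m : ℤ))).map (θ m) ≫
      (shiftFunctorAdd' (DerivedCategory (ModuleCat.{u} R)) (1 : ℤ) ((m : ℕ) : ℤ)
        (((m + 1 : ℕ) : ℤ)) (by push_cast; ring)).inv.app _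

/-!
Call a morphism a `[G]ₙ`-ghost if it kills every morphism out of an object of `[G]ₙ`.
A degree-one morphism between modules is an `[R]₀`-ghost, because `Hom(R[j], N[d]) = 0`
for `j ≠ d` (`R` is projective), and by the ghost lemma a composite of `n + 1` such maps is an
`[R]ₙ`-ghost. Hence `φ ≫ θ_{n+1} ∘ ⋯ ∘ θ_1`, extended to `M ⊕ M'`, dies on `P`, so it factors
through `C`, on which `f` acts by zero.
-/

def IsGhost (G : C) (n : ℕ) {A B : C} (a : A ⟶ B) : Prop :=
  ∀ P, Gen G n P → ∀ ψ : P ⟶ A, ψ ≫ a = 0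

lemma IsGhost.comp_left {G : C} {n : ℕ} {A B B' : C} (a : A ⟶ B) {b : B ⟶ B'}
    (hb : IsGhost G n b) : IsGhost G n (a ≫ b) := fun P hP ψ => by
  simpa using hb P hP (ψ ≫ a)

lemma IsGhost.comp {G : C} {n : ℕ} {A B B' : C} {a : A ⟶ B} {b : B ⟶ B'}
    (ha : IsGhost G n a) (hb : IsGhost G 0 b) : IsGhost G (n + 1) (a ≫ b) := by
  rintro P ⟨Y, Z, u, v, w, hY, hZ, hT⟩ ψ
  obtain ⟨g, hg⟩ : ∃ g : Z ⟶ B, ψ ≫ a = v ≫ g :=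
    Triangle.yoneda_exact₂ _ hT (ψ ≫ a) ((ha.comp_left ψ) Y hY u)
  rw [← Category.assoc, hg, Category.assoc, hb Z hZ g, comp_zero]

lemma isGhost_zero_of_forall_shift {G A B : C} {a : A ⟶ B}
    (ha : ∀ (j : ℤ) (ψ : (shiftFunctor C j).obj G ⟶ A), ψ ≫ a = 0) : IsGhost G 0 a := by
  intro P hP
  induction hP with
  | shift j X e =>
      obtain ⟨e⟩ := e
      intro ψ
      rw [← e.hom_inv_id_assoc ψ, Category.assoc, ha, comp_zero]
  | zero X hX =>
      intro ψ
      rw [hX.eq_of_src ψ 0, zero_comp]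
  | sum Z b hb e _ _ ihX ihY =>
      obtain ⟨hb⟩ := hb
      obtain ⟨e⟩ := e
      intro ψ
      suffices h : (e.inv ≫ ψ) ≫ a = 0 by rw [← e.hom_inv_id_assoc ψ, Category.assoc, h, comp_zero]
      apply hb.isColimit.hom_ext
      rintro ⟨⟨⟩⟩
      · simpa using ihX (b.inl ≫ e.inv ≫ ψ)
      · simpa using ihY (b.inr ≫ e.inv ≫ ψ)

lemma smul_eq_zero_of_distTriang {𝕜 : Type*} [Semiring 𝕜] [Linear 𝕜 C] (r : 𝕜) {T : Triangle C}
    (hT : T ∈ distTriang C) (hr : r • 𝟙 T.obj₃ = 0) {Y : C} (h : T.obj₂ ⟶ Y)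
    (hh : T.mor₁ ≫ h = 0) : r • h = 0 := by
  obtain ⟨g, rfl⟩ := Triangle.yoneda_exact₂ T hT h hh
  rw [← Linear.comp_smul, ← Category.id_comp g, ← Linear.smul_comp, hr, zero_comp, comp_zero]

namespace DerivedCategory

variable {𝒜 : Type*} [Category 𝒜] [Abelian 𝒜] [HasDerivedCategory 𝒜]

lemma singleFunctor_hom_eq_zero_of_projective {P N : 𝒜} [Projective P] {a b : ℤ} (hab : a ≠ b)
    (φ : (singleFunctor 𝒜 a).obj P ⟶ (singleFunctor 𝒜 b).obj N) : φ = 0 := by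
  rcases lt_or_gt_of_ne hab with h | h
  · exact TStructure.t.zero φ a b h
  · exact from_singleFunctor_obj_eq_zero_of_projective
      (L := (CochainComplex.singleFunctor 𝒜 b).obj N) φ b h

lemma shift_singleFunctor_hom_eq_zero_of_projective {P N : 𝒜} [Projective P] {j d : ℤ}
    (hjd : j ≠ d)
    (φ : ((singleFunctor 𝒜 0).obj P)⟦j⟧ ⟶ ((singleFunctor 𝒜 0).obj N)⟦d⟧) : φ = 0 := by
  let eP := ((singleFunctors 𝒜).shiftIso j (-j) 0 (by omega)).app P
  let eN := ((singleFunctors 𝒜).shiftIso d (-d) 0 (by omega)).app N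
  have h : eP.inv ≫ φ ≫ eN.hom = 0 :=
    singleFunctor_hom_eq_zero_of_projective (by omega) _
  simpa [eP, eN, cancel_epi, cancel_mono] using h

lemma isGhost_zero_of_shift_singleFunctor {P M N : 𝒜} [Projective P] {a b : ℤ} (hab : a ≠ b)
    (g : ((singleFunctor 𝒜 0).obj M)⟦a⟧ ⟶ ((singleFunctor 𝒜 0).obj N)⟦b⟧) :
    IsGhost ((singleFunctor 𝒜 0).obj P) 0 g := by
  refine isGhost_zero_of_forall_shift fun j ψ => ?_
  by_cases hj : j = a
  · exact shift_singleFunctor_hom_eq_zero_of_projective (by omega) _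
  · rw [shift_singleFunctor_hom_eq_zero_of_projective hj ψ, zero_comp]

end DerivedCategory

lemma isGhost_thetaChain (R : Type u) [CommRing R] [HasDerivedCategory (ModuleCat.{u} R)]
    (S : ℕ → ModuleCat.{u} R)
    (θ : ∀ k, sObj R (S k) ⟶
      (shiftFunctor (DerivedCategory (ModuleCat.{u} R)) (1 : ℤ)).obj (sObj R (S (k + 1))))
    (m : ℕ) : IsGhost (sObj R (ModuleCat.of R R)) m (thetaChain R S θ (m + 1)) := by
  have step : ∀ k : ℕ, IsGhost (sObj R (ModuleCat.of R R)) 0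
      ((θ k)⟦(k : ℤ)⟧' ≫ (shiftFunctorAdd' (DerivedCategory (ModuleCat.{u} R))
        (1 : ℤ) (k : ℤ) ((k + 1 : ℕ) : ℤ) (by push_cast; ring)).inv.app _) := fun k =>
    DerivedCategory.isGhost_zero_of_shift_singleFunctor (by omega) _
  induction m with
  | zero => exact (step 0).comp_left _
  | succ m ih => exact ih.comp (step (m + 1))

/-- If `M ∈_f ⟨R⟩ₙ` in `D(R-Mod)`, then for any `R`-modules `S_0, …, S_{n+1}` and any
morphisms `θ_k : S_{k-1} → S_k[1]`, the image of
`Hom(M, S_0) → Hom(M, S_{n+1}[n+1])` induced by the composite `θ_{n+1} ∘ ⋯ ∘ θ_1`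
is annihilated by `f` (multiplication by `f` being induced by `f • 𝟙` on a complex
representing `M`). -/
theorem f_annihilates_image (f : R) (n : ℕ) (K : CochainComplex (ModuleCat.{u} R) ℤ)
    (hM : FApprox R f n (DerivedCategory.Q.obj K))
    (S : ℕ → ModuleCat.{u} R)
    (θ : ∀ k, sObj R (S k) ⟶
      (shiftFunctor (DerivedCategory (ModuleCat.{u} R)) (1 : ℤ)).obj (sObj R (S (k + 1))))
    (φ : DerivedCategory.Q.obj K ⟶ sObj R (S 0)) :
    DerivedCategory.Q.map (f • 𝟙 K) ≫ φ ≫ thetaChain R S θ (n + 1) = 0 := by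
  obtain ⟨X', b, -, P, hP, KC, u, v, w, hT, hf⟩ := hM
  have hKC : f • 𝟙 (Q.obj KC) = 0 := by rw [← Q.map_id, ← Functor.map_smul, hf]
  have hkill : f • ((b.fst ≫ φ) ≫ thetaChain R S θ (n + 1)) = 0 :=
    smul_eq_zero_of_distTriang f hT hKC _ ((isGhost_thetaChain R S θ n).comp_left _ P hP u)
  rw [Functor.map_smul, Q.map_id, Linear.smul_comp, Category.id_comp, ← b.inl_fst_assoc φ,
    Category.assoc, ← Linear.comp_smul, hkill, comp_zero]

end
end
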